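/- arXiv:1110.1791 — 2 statements merged into one kernel-verified Lean document; each statement's English description precedes it below -/
import Mathlib

section
/- Assume conditions (P) and (S), and let α = (α₁, α₂) ∈ ℝ² with α₁ > 0 and α₂ > 0. Suppose that γ(θ) = (Σ₁₁ / (2 r₁₁)) γ₁(θ) (α₁ − θ₁) + (Σ₂₂ / (2 r₂₂)) γ₂(θ) (α₂ − θ₂) holds for all θ ∈ ℝ² with θ < α componentwise. Then this identity holds for all θ ∈ ℝ², γ(α) = 0, and α = θ̃^(1,r) = θ̃^(2,r). -/
open Matrix Set

noncomputable section

abbrev V : Type := Fin 2 → ℝ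

def gam (S : Matrix (Fin 2) (Fin 2) ℝ) (μ : V) (θ : V) : ℝ :=
  -(1/2) * (θ ⬝ᵥ S.mulVec θ) - μ ⬝ᵥ θ

def gam1 (R : Matrix (Fin 2) (Fin 2) ℝ) (θ : V) : ℝ := R 0 0 * θ 0 + R 1 0 * θ 1
def gam2 (R : Matrix (Fin 2) (Fin 2) ℝ) (θ : V) : ℝ := R 0 1 * θ 0 + R 1 1 * θ 1

def condP (R : Matrix (Fin 2) (Fin 2) ℝ) : Prop :=
  0 < R 0 0 ∧ 0 < R 1 1 ∧ 0 < R 0 0 * R 1 1 - R 0 1 * R 1 0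

def condS (μ : V) (R : Matrix (Fin 2) (Fin 2) ℝ) : Prop :=
  R 1 1 * μ 0 - R 0 1 * μ 1 < 0 ∧ R 0 0 * μ 1 - R 1 0 * μ 0 < 0

def pvec1 (R : Matrix (Fin 2) (Fin 2) ℝ) : V := ![R 1 1, -(R 0 1)]
def pvec2 (R : Matrix (Fin 2) (Fin 2) ℝ) : V := ![-(R 1 0), R 0 0]

def θray1 (S : Matrix (Fin 2) (Fin 2) ℝ) (μ : V) (R : Matrix (Fin 2) (Fin 2) ℝ) : V :=
  (-2 * (μ ⬝ᵥ pvec1 R) / (pvec1 R ⬝ᵥ S.mulVec (pvec1 R))) • pvec1 R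

def θray2 (S : Matrix (Fin 2) (Fin 2) ℝ) (μ : V) (R : Matrix (Fin 2) (Fin 2) ℝ) : V :=
  (-2 * (μ ⬝ᵥ pvec2 R) / (pvec2 R ⬝ᵥ S.mulVec (pvec2 R))) • pvec2 R

def Gam (S : Matrix (Fin 2) (Fin 2) ℝ) (μ : V) : Set V := {θ | 0 < gam S μ θ}

def ltc (θ θ' : V) : Prop := ∀ i, θ i < θ' i

def Gmax (S : Matrix (Fin 2) (Fin 2) ℝ) (μ : V) : Set V :=
  {θ | ∃ θ' ∈ Gam S μ, ltc θ θ'}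

def Dset (S : Matrix (Fin 2) (Fin 2) ℝ) (μ : V) (i : Fin 2) (c : ℝ) : Set V :=
  {θ | ∃ θ' ∈ Gam S μ, ltc θ θ' ∧ θ' i < c}

/-!
Both sides of the product-form identity are quadratic polynomials in `θ`, so agreeing on the open
set `{θ < α}` they agree everywhere, and the right-hand side vanishes at `θ = α`.
On the line `gam2 R θ = 0` the identity reads `γ θ = a * gam1 R θ * (α 0 - θ 0)` with `a ≠ 0`, and
`gam1 R ≠ 0` at the nonzero point `θray1`; hence `θray1 0 = α 0`. On the line `θ 0 = α 0` it reads
`γ θ = b * gam2 R θ * (α 1 - θ 1)`, so the only zeros of `γ` there are `α` and `θray1`. This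
identifies `θ̃^(1,r)` with `α`, except when `θray1 = θ^(1,max)`: then that line is tangent to `∂Γ`
and the two zeros coincide. The second index is symmetric.
-/
open Filter Topology
open scoped ContDiff

theorem exists_gt_quadratic_eq_zero {a b c x₀ : ℝ} (ha : a < 0)
    (h : 0 < a * x₀ ^ 2 + b * x₀ + c) : ∃ x, x₀ < x ∧ a * x ^ 2 + b * x + c = 0 := by
  have hd : 0 ≤ discrim a b c := by
    unfold discrim; nlinarith [sq_nonneg (2 * a * x₀ + b), mul_neg_of_neg_of_pos ha h]
  set s := √(discrim a b c)
  have hs : discrim a b c = s * s := (Real.mul_self_sqrt hd).symm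
  -- `s ^ 2 - (2 * a * x₀ + b) ^ 2 = -4 * a * q x₀ > 0`
  have hlt : -(2 * a * x₀ + b) < s := Real.lt_sqrt_of_sq_lt (by unfold discrim; nlinarith)
  refine ⟨(-b - s) / (2 * a), by rw [lt_div_iff_of_neg (by linarith)]; linarith, ?_⟩
  linear_combination (quadratic_eq_zero_iff ha.ne hs _).2 (Or.inr rfl)

/-- Two zeros on the vertical line through the rightmost zero would put their midpoint inside
`q > 0`, and the horizontal line through it would leave `q > 0` further right. -/
theorem snd_eq_of_fst_eq_max {A B C D E x₀ y y' : ℝ} (hA : A < 0) (hC : C < 0)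
    (hmax : ∀ x y, A * x ^ 2 + B * x * y + C * y ^ 2 + D * x + E * y = 0 → x ≤ x₀)
    (hy : A * x₀ ^ 2 + B * x₀ * y + C * y ^ 2 + D * x₀ + E * y = 0)
    (hy' : A * x₀ ^ 2 + B * x₀ * y' + C * y' ^ 2 + D * x₀ + E * y' = 0) : y = y' := by
  by_contra hne
  set m := (y + y') / 2
  have hmid : A * x₀ ^ 2 + B * x₀ * m + C * m ^ 2 + D * x₀ + E * m = -C * (y - y') ^ 2 / 4 := by
    linear_combination (hy + hy') / 2
  have hpos : 0 < A * x₀ ^ 2 + (B * m + D) * x₀ + (C * m ^ 2 + E * m) := by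
    have : 0 < (y - y') ^ 2 := sq_pos_of_ne_zero (sub_ne_zero.2 hne)
    nlinarith
  obtain ⟨x, hx, hq⟩ := exists_gt_quadratic_eq_zero hA hpos
  exact (hmax x m (by linear_combination hq)).not_gt hx

theorem gam_apply (S : Matrix (Fin 2) (Fin 2) ℝ) (μ θ : V) :
    gam S μ θ = -(S 0 0 / 2) * θ 0 ^ 2 + -((S 0 1 + S 1 0) / 2) * θ 0 * θ 1
      + -(S 1 1 / 2) * θ 1 ^ 2 + -μ 0 * θ 0 + -μ 1 * θ 1 := by
  simp only [gam, dotProduct, mulVec, Fin.sum_univ_two]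
  ring

theorem eq_of_gam_eq_zero_of_fst_eq_max {S : Matrix (Fin 2) (Fin 2) ℝ} {μ θ θ' : V} {m : ℝ}
    (hS : S.PosDef) (hmax : ∀ θ, gam S μ θ = 0 → θ 0 ≤ m)
    (hθ : gam S μ θ = 0) (hθ' : gam S μ θ' = 0) (h : θ 0 = m) (h' : θ' 0 = m) : θ = θ' := by
  rw [gam_apply, h] at hθ
  rw [gam_apply, h'] at hθ'
  have h1 := snd_eq_of_fst_eq_max (by linarith [hS.diag_pos (i := 0)])
    (by linarith [hS.diag_pos (i := 1)])
    (fun x y hxy => by simpa using hmax ![x, y] (by rw [gam_apply]; simpa using hxy)) hθ hθ'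
  exact funext (Fin.forall_fin_two.2 ⟨h.trans h'.symm, h1⟩)

theorem eq_of_gam_eq_zero_of_snd_eq_max {S : Matrix (Fin 2) (Fin 2) ℝ} {μ θ θ' : V} {m : ℝ}
    (hS : S.PosDef) (hmax : ∀ θ, gam S μ θ = 0 → θ 1 ≤ m)
    (hθ : gam S μ θ = 0) (hθ' : gam S μ θ' = 0) (h : θ 1 = m) (h' : θ' 1 = m) : θ = θ' := by
  rw [gam_apply, h] at hθ
  rw [gam_apply, h'] at hθ'
  have h0 := snd_eq_of_fst_eq_max (A := -(S 1 1 / 2)) (B := -((S 0 1 + S 1 0) / 2))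
    (C := -(S 0 0 / 2)) (D := -μ 1) (E := -μ 0) (x₀ := m) (y := θ 0) (y' := θ' 0)
    (by linarith [hS.diag_pos (i := 1)]) (by linarith [hS.diag_pos (i := 0)])
    (fun x y hxy => by simpa using hmax ![y, x] (by rw [gam_apply]; simp only [cons_val_zero, cons_val_one]; linear_combination hxy))
    (by linear_combination hθ) (by linear_combination hθ')
  exact funext (Fin.forall_fin_two.2 ⟨h0, h.trans h'.symm⟩)

theorem gam_smul_eq_zero (S : Matrix (Fin 2) (Fin 2) ℝ) (μ p : V) (hp : p ⬝ᵥ S *ᵥ p ≠ 0) :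
    gam S μ ((-2 * (μ ⬝ᵥ p) / (p ⬝ᵥ S *ᵥ p)) • p) = 0 := by
  simp only [gam, smul_dotProduct, dotProduct_smul, mulVec_smul, smul_eq_mul]
  field_simp
  ring

section Rays

variable {S R : Matrix (Fin 2) (Fin 2) ℝ} {μ : V}

theorem gam2_θray1 : gam2 R (θray1 S μ R) = 0 := by
  simp only [gam2, θray1, pvec1, Pi.smul_apply, smul_eq_mul, cons_val_zero, cons_val_one]
  ring

theorem gam1_θray2 : gam1 R (θray2 S μ R) = 0 := by
  simp only [gam1, θray2, pvec2, Pi.smul_apply, smul_eq_mul, cons_val_zero, cons_val_one]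
  ring

theorem pvec1_ne_zero (hR : R 1 1 ≠ 0) : pvec1 R ≠ 0 := fun h => hR <| by
  simpa only [pvec1, cons_val_zero, Pi.zero_apply] using congrFun h 0

theorem pvec2_ne_zero (hR : R 0 0 ≠ 0) : pvec2 R ≠ 0 := fun h => hR <| by
  simpa only [pvec2, cons_val_one, cons_val_zero, Pi.zero_apply] using congrFun h 1

theorem pvec1_quad_pos (hS : S.PosDef) (hR : R 1 1 ≠ 0) : 0 < pvec1 R ⬝ᵥ S *ᵥ pvec1 R :=
  hS.dotProduct_mulVec_pos (pvec1_ne_zero hR)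

theorem pvec2_quad_pos (hS : S.PosDef) (hR : R 0 0 ≠ 0) : 0 < pvec2 R ⬝ᵥ S *ᵥ pvec2 R :=
  hS.dotProduct_mulVec_pos (pvec2_ne_zero hR)

theorem gam_θray1 (hS : S.PosDef) (hR : R 1 1 ≠ 0) : gam S μ (θray1 S μ R) = 0 :=
  gam_smul_eq_zero S μ _ (pvec1_quad_pos hS hR).ne'

theorem gam_θray2 (hS : S.PosDef) (hR : R 0 0 ≠ 0) : gam S μ (θray2 S μ R) = 0 :=
  gam_smul_eq_zero S μ _ (pvec2_quad_pos hS hR).ne'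

theorem gam1_θray1_ne_zero (hS : S.PosDef) (hP : condP R) (hSμ : condS μ R) :
    gam1 R (θray1 S μ R) ≠ 0 := by
  obtain ⟨-, hR11, hdet⟩ := hP
  have hq := (pvec1_quad_pos hS hR11.ne').ne'
  have hμp : μ ⬝ᵥ pvec1 R ≠ 0 := by
    simp only [pvec1, dotProduct, Fin.sum_univ_two, cons_val_zero, cons_val_one]
    linarith [hSμ.1]
  have : gam1 R (θray1 S μ R) =
      -2 * (μ ⬝ᵥ pvec1 R) / (pvec1 R ⬝ᵥ S *ᵥ pvec1 R) * (R 0 0 * R 1 1 - R 0 1 * R 1 0) := by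
    simp only [gam1, θray1, pvec1, Pi.smul_apply, smul_eq_mul, cons_val_zero, cons_val_one]
    ring
  rw [this]
  exact mul_ne_zero (div_ne_zero (mul_ne_zero (by norm_num) hμp) hq) hdet.ne'

theorem gam2_θray2_ne_zero (hS : S.PosDef) (hP : condP R) (hSμ : condS μ R) :
    gam2 R (θray2 S μ R) ≠ 0 := by
  obtain ⟨hR00, -, hdet⟩ := hP
  have hq := (pvec2_quad_pos hS hR00.ne').ne'
  have hμp : μ ⬝ᵥ pvec2 R ≠ 0 := by
    simp only [pvec2, dotProduct, Fin.sum_univ_two, cons_val_zero, cons_val_one]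
    linarith [hSμ.2]
  have : gam2 R (θray2 S μ R) =
      -2 * (μ ⬝ᵥ pvec2 R) / (pvec2 R ⬝ᵥ S *ᵥ pvec2 R) * (R 0 0 * R 1 1 - R 0 1 * R 1 0) := by
    simp only [gam2, θray2, pvec2, Pi.smul_apply, smul_eq_mul, cons_val_zero, cons_val_one]
    ring
  rw [this]
  exact mul_ne_zero (div_ne_zero (mul_ne_zero (by norm_num) hμp) hq) hdet.ne'

end Rays

def productForm (S R : Matrix (Fin 2) (Fin 2) ℝ) (α θ : V) : ℝ :=
  S 0 0 / (2 * R 0 0) * gam1 R θ * (α 0 - θ 0) + S 1 1 / (2 * R 1 1) * gam2 R θ * (α 1 - θ 1)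

theorem contDiff_gam (S : Matrix (Fin 2) (Fin 2) ℝ) (μ : V) : ContDiff ℝ ω (gam S μ) := by
  rw [show gam S μ = _ from funext (gam_apply S μ)]
  fun_prop

theorem contDiff_productForm (S R : Matrix (Fin 2) (Fin 2) ℝ) (α : V) :
    ContDiff ℝ ω (productForm S R α) := by
  unfold productForm gam1 gam2
  fun_prop

theorem eq_of_forall_ltc {f g : V → ℝ} (hf : ContDiff ℝ ω f) (hg : ContDiff ℝ ω g) {α : V}
    (h : ∀ θ, ltc θ α → f θ = g θ) : f = g := by
  have hlt : ∀ᶠ θ in 𝓝 (α - 1), ltc θ α := eventually_all.2 fun i =>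
    (continuous_apply i).continuousAt.eventually_lt continuousAt_const (by simp)
  exact hf.analyticOnNhd.eq_of_eventuallyEq hg.analyticOnNhd (hlt.mono h)

theorem eq_of_gam2_eq {R : Matrix (Fin 2) (Fin 2) ℝ} {θ θ' : V} (hR : R 1 1 ≠ 0)
    (h : gam2 R θ = gam2 R θ') (h0 : θ 0 = θ' 0) : θ = θ' := by
  refine funext (Fin.forall_fin_two.2 ⟨h0, mul_left_cancel₀ hR ?_⟩)
  simp only [gam2, h0] at h
  linarith

theorem eq_of_gam1_eq {R : Matrix (Fin 2) (Fin 2) ℝ} {θ θ' : V} (hR : R 0 0 ≠ 0)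
    (h : gam1 R θ = gam1 R θ') (h1 : θ 1 = θ' 1) : θ = θ' := by
  refine funext (Fin.forall_fin_two.2 ⟨mul_left_cancel₀ hR ?_, h1⟩)
  simp only [gam1, h1] at h
  linarith

section ProductForm

variable {S R : Matrix (Fin 2) (Fin 2) ℝ} {μ α : V}

theorem gam_eq_zero_of_productForm (hfac : ∀ θ, gam S μ θ = productForm S R α θ) :
    gam S μ α = 0 := by
  simp [hfac α, productForm]

theorem θray1_zero_of_productForm (hfac : ∀ θ, gam S μ θ = productForm S R α θ)
    (hS : S.PosDef) (hP : condP R) (hSμ : condS μ R) : θray1 S μ R 0 = α 0 := by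
  have h := hfac (θray1 S μ R)
  rw [gam_θray1 hS hP.2.1.ne', productForm, gam2_θray1, mul_zero, zero_mul, add_zero] at h
  have ha : S 0 0 / (2 * R 0 0) ≠ 0 := div_ne_zero hS.diag_pos.ne' (by linarith [hP.1])
  exact (sub_eq_zero.1 ((mul_eq_zero.1 h.symm).resolve_left
    (mul_ne_zero ha (gam1_θray1_ne_zero hS hP hSμ)))).symm

theorem θray2_one_of_productForm (hfac : ∀ θ, gam S μ θ = productForm S R α θ)
    (hS : S.PosDef) (hP : condP R) (hSμ : condS μ R) : θray2 S μ R 1 = α 1 := by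
  have h := hfac (θray2 S μ R)
  rw [gam_θray2 hS hP.1.ne', productForm, gam1_θray2, mul_zero, zero_mul, zero_add] at h
  have hb : S 1 1 / (2 * R 1 1) ≠ 0 := div_ne_zero hS.diag_pos.ne' (by linarith [hP.2.1])
  exact (sub_eq_zero.1 ((mul_eq_zero.1 h.symm).resolve_left
    (mul_ne_zero hb (gam2_θray2_ne_zero hS hP hSμ)))).symm

theorem eq_or_gam2_eq_zero_of_productForm (hfac : ∀ θ, gam S μ θ = productForm S R α θ)
    (hS : S.PosDef) (hR : R 1 1 ≠ 0) {θ : V} (hθ : gam S μ θ = 0) (h0 : θ 0 = α 0) :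
    θ = α ∨ gam2 R θ = 0 := by
  rw [hfac, productForm, h0, sub_self, mul_zero, zero_add] at hθ
  have hb : S 1 1 / (2 * R 1 1) ≠ 0 := div_ne_zero hS.diag_pos.ne' (mul_ne_zero two_ne_zero hR)
  rcases mul_eq_zero.1 hθ with h | h
  · exact Or.inr ((mul_eq_zero.1 h).resolve_left hb)
  · exact Or.inl (funext (Fin.forall_fin_two.2 ⟨h0, (sub_eq_zero.1 h).symm⟩))

theorem eq_or_gam1_eq_zero_of_productForm (hfac : ∀ θ, gam S μ θ = productForm S R α θ)
    (hS : S.PosDef) (hR : R 0 0 ≠ 0) {θ : V} (hθ : gam S μ θ = 0) (h1 : θ 1 = α 1) :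
    θ = α ∨ gam1 R θ = 0 := by
  rw [hfac, productForm, h1, sub_self, mul_zero, add_zero] at hθ
  have ha : S 0 0 / (2 * R 0 0) ≠ 0 := div_ne_zero hS.diag_pos.ne' (mul_ne_zero two_ne_zero hR)
  rcases mul_eq_zero.1 hθ with h | h
  · exact Or.inr ((mul_eq_zero.1 h).resolve_left ha)
  · exact Or.inl (funext (Fin.forall_fin_two.2 ⟨(sub_eq_zero.1 h).symm, h1⟩))

theorem eq_tθ1r_of_productForm (hfac : ∀ θ, gam S μ θ = productForm S R α θ)
    (hS : S.PosDef) (hP : condP R) (hSμ : condS μ R) {θmax1 tθ1r : V}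
    (hmax1 : ∀ θ, gam S μ θ = 0 → θ 0 ≤ θmax1 0)
    (htθ1r : (θray1 S μ R = θmax1 ∧ tθ1r = θmax1) ∨
      (θray1 S μ R ≠ θmax1 ∧ gam S μ tθ1r = 0 ∧
        tθ1r 0 = θray1 S μ R 0 ∧ tθ1r 1 ≠ θray1 S μ R 1)) :
    α = tθ1r := by
  have hray := θray1_zero_of_productForm hfac hS hP hSμ
  rcases htθ1r with ⟨rfl, rfl⟩ | ⟨-, hg, h0, h1⟩
  · exact eq_of_gam_eq_zero_of_fst_eq_max hS hmax1 (gam_eq_zero_of_productForm hfac)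
      (gam_θray1 hS hP.2.1.ne') hray.symm rfl
  · rcases eq_or_gam2_eq_zero_of_productForm hfac hS hP.2.1.ne' hg (h0.trans hray) with h | h
    · exact h.symm
    · exact absurd (congrFun (eq_of_gam2_eq hP.2.1.ne' (h.trans gam2_θray1.symm) h0) 1) h1

theorem eq_tθ2r_of_productForm (hfac : ∀ θ, gam S μ θ = productForm S R α θ)
    (hS : S.PosDef) (hP : condP R) (hSμ : condS μ R) {θmax2 tθ2r : V}
    (hmax2 : ∀ θ, gam S μ θ = 0 → θ 1 ≤ θmax2 1)
    (htθ2r : (θray2 S μ R = θmax2 ∧ tθ2r = θmax2) ∨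
      (θray2 S μ R ≠ θmax2 ∧ gam S μ tθ2r = 0 ∧
        tθ2r 1 = θray2 S μ R 1 ∧ tθ2r 0 ≠ θray2 S μ R 0)) :
    α = tθ2r := by
  have hray := θray2_one_of_productForm hfac hS hP hSμ
  rcases htθ2r with ⟨rfl, rfl⟩ | ⟨-, hg, h1, h0⟩
  · exact eq_of_gam_eq_zero_of_snd_eq_max hS hmax2 (gam_eq_zero_of_productForm hfac)
      (gam_θray2 hS hP.1.ne') hray.symm rfl
  · rcases eq_or_gam1_eq_zero_of_productForm hfac hS hP.1.ne' hg (h1.trans hray) with h | h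
    · exact h.symm
    · exact absurd (congrFun (eq_of_gam1_eq hP.1.ne' (h.trans gam1_θray2.symm) h1) 0) h0

end ProductForm

theorem stmt_13_general
    (S R : Matrix (Fin 2) (Fin 2) ℝ) (μ : V)
    (hSpd : S.PosDef)
    (hP : condP R) (hS : condS μ R)
    (θmax1 θmax2 tθ1r tθ2r : V)
    (hmax1 : gam S μ θmax1 = 0 ∧ ∀ θ, gam S μ θ = 0 → θ 0 ≤ θmax1 0)
    (hmax2 : gam S μ θmax2 = 0 ∧ ∀ θ, gam S μ θ = 0 → θ 1 ≤ θmax2 1)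
    (htθ1r : (θray1 S μ R = θmax1 ∧ tθ1r = θmax1) ∨
      (θray1 S μ R ≠ θmax1 ∧ gam S μ tθ1r = 0 ∧
        tθ1r 0 = θray1 S μ R 0 ∧ tθ1r 1 ≠ θray1 S μ R 1))
    (htθ2r : (θray2 S μ R = θmax2 ∧ tθ2r = θmax2) ∨
      (θray2 S μ R ≠ θmax2 ∧ gam S μ tθ2r = 0 ∧
        tθ2r 1 = θray2 S μ R 1 ∧ tθ2r 0 ≠ θray2 S μ R 0))
    (α : V)
    (hfac : ∀ θ : V, ltc θ α → gam S μ θ =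
      S 0 0 / (2 * R 0 0) * gam1 R θ * (α 0 - θ 0) +
      S 1 1 / (2 * R 1 1) * gam2 R θ * (α 1 - θ 1)) :
    (∀ θ : V, gam S μ θ =
      S 0 0 / (2 * R 0 0) * gam1 R θ * (α 0 - θ 0) +
      S 1 1 / (2 * R 1 1) * gam2 R θ * (α 1 - θ 1)) ∧
    gam S μ α = 0 ∧ α = tθ1r ∧ α = tθ2r := by
  have hfac' : ∀ θ, gam S μ θ = productForm S R α θ :=
    congrFun (eq_of_forall_ltc (contDiff_gam S μ) (contDiff_productForm S R α) hfac)
  exact ⟨hfac', gam_eq_zero_of_productForm hfac',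
    eq_tθ1r_of_productForm hfac' hSpd hP hS hmax1.2 htθ1r,
    eq_tθ2r_of_productForm hfac' hSpd hP hS hmax2.2 htθ2r⟩

/-- if the factorization of `γ` holds for all `θ < α` componentwise (with
`α > 0` componentwise), then it holds everywhere, `γ(α) = 0`, and `α = θ̃^(1,r) = θ̃^(2,r)`. -/
theorem stmt_13
    (S R : Matrix (Fin 2) (Fin 2) ℝ) (μ : V)
    (hSpd : S.PosDef) (hSsym : S.IsSymm) (hμ : μ ≠ 0)
    (hP : condP R) (hS : condS μ R)
    (θmax1 θmax2 tθ1r tθ2r : V)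
    (hmax1 : gam S μ θmax1 = 0 ∧ ∀ θ, gam S μ θ = 0 → θ 0 ≤ θmax1 0)
    (hmax2 : gam S μ θmax2 = 0 ∧ ∀ θ, gam S μ θ = 0 → θ 1 ≤ θmax2 1)
    (htθ1r : (θray1 S μ R = θmax1 ∧ tθ1r = θmax1) ∨
      (θray1 S μ R ≠ θmax1 ∧ gam S μ tθ1r = 0 ∧
        tθ1r 0 = θray1 S μ R 0 ∧ tθ1r 1 ≠ θray1 S μ R 1))
    (htθ2r : (θray2 S μ R = θmax2 ∧ tθ2r = θmax2) ∨
      (θray2 S μ R ≠ θmax2 ∧ gam S μ tθ2r = 0 ∧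
        tθ2r 1 = θray2 S μ R 1 ∧ tθ2r 0 ≠ θray2 S μ R 0))
    (α : V) (hα0 : 0 < α 0) (hα1 : 0 < α 1)
    (hfac : ∀ θ : V, ltc θ α → gam S μ θ =
      S 0 0 / (2 * R 0 0) * gam1 R θ * (α 0 - θ 0) +
      S 1 1 / (2 * R 1 1) * gam2 R θ * (α 1 - θ 1)) :
    (∀ θ : V, gam S μ θ =
      S 0 0 / (2 * R 0 0) * gam1 R θ * (α 0 - θ 0) +
      S 1 1 / (2 * R 1 1) * gam2 R θ * (α 1 - θ 1)) ∧
    gam S μ α = 0 ∧ α = tθ1r ∧ α = tθ2r :=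
  stmt_13_general S R μ hSpd hP hS θmax1 θmax2 tθ1r tθ2r hmax1 hmax2 htθ1r htθ2r α hfac
end
end

section
/- Let f : [0, ∞) → [0, ∞) be integrable on [0, ∞) and ultimately nonincreasing. Let n ≥ 1 be an integer, κ ∈ ℝ, b > 0 and α ≥ 0. If lim_{x→∞} Tⁿ(f)(x) / (x^κ e^{−αx}) = b, then lim_{x→∞} f(x) / (x^κ e^{−αx}) = αⁿ b. -/
open MeasureTheory Filter Set Real

noncomputable section

/-- The iterated tail-integration operator: `Titer 0 f = f` and
`Titer (n+1) f x = ∫_x^∞ Titer n f u du`. -/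
def Titer : ℕ → (ℝ → ℝ) → ℝ → ℝ
  | 0, f => f
  | n + 1, f => fun x => ∫ u in Set.Ioi x, Titer n f u

/-!
For `g` antitone and integrable near `∞` with tail `T x = ∫_x^∞ g`, and every `h > 0`,
`(T x - T (x + h)) / h ≤ g x ≤ (T (x - h) - T x) / h`. If `T x / φ x → c` for a weight with
`φ (x + d) / φ x → e^{-αd}`, the two bounds divided by `φ x` tend to `c (1 - e^{-αh}) / h` and
`c (e^{αh} - 1) / h`, which both tend to `α c` as `h → 0⁺`; hence `g x / φ x → α c`. Applying this
`n` times, from `Tⁿ f` down to `f`, gives the theorem. The iterates stay antitone near `∞` since an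
antitone function integrable near `∞` is nonnegative there, and they stay integrable near `∞` since
otherwise `Tⁿ f` would vanish identically (a non-integrable integral is `0`), contradicting `b ≠ 0`.
-/

open Topology

theorem tendsto_of_squeeze_family {ι β γ : Type*} [TopologicalSpace γ] [LinearOrder γ]
    [OrderTopology γ] {F : Filter ι} {G : Filter β} [G.NeBot] {u : ι → γ} {l r : β → γ} {a : γ}
    (hl : Tendsto l G (𝓝 a)) (hr : Tendsto r G (𝓝 a))
    (hsq : ∀ᶠ h in G, ∃ L U : ι → γ, Tendsto L F (𝓝 (l h)) ∧ Tendsto U F (𝓝 (r h)) ∧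
      ∀ᶠ x in F, L x ≤ u x ∧ u x ≤ U x) :
    Tendsto u F (𝓝 a) := by
  refine tendsto_order.2 ⟨fun a' ha' => ?_, fun a' ha' => ?_⟩
  · obtain ⟨h, hlh, L, _, hL, -, hLU⟩ := ((hl.eventually (lt_mem_nhds ha')).and hsq).exists
    filter_upwards [hL.eventually (lt_mem_nhds hlh), hLU] with x hx hxu using hx.trans_le hxu.1
  · obtain ⟨h, hrh, _, U, -, hU, hLU⟩ := ((hr.eventually (gt_mem_nhds ha')).and hsq).exists
    filter_upwards [hU.eventually (gt_mem_nhds hrh), hLU] with x hx hxu using hxu.2.trans_lt hx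

theorem tendsto_exp_mul_sub_one_div (a : ℝ) :
    Tendsto (fun h => (exp (a * h) - 1) / h) (𝓝[≠] 0) (𝓝 a) := by
  have hd : HasDerivAt (fun t => exp (a * t)) a 0 := by
    simpa using ((hasDerivAt_id (0 : ℝ)).const_mul a).exp
  refine (hasDerivAt_iff_tendsto_slope.mp hd).congr fun h => ?_
  simp [slope_def_field]

theorem tendsto_comp_add_div_of_tendsto_div {F φ : ℝ → ℝ} {c ρ d : ℝ}
    (hφ : ∀ᶠ x in atTop, φ x ≠ 0) (hρ : Tendsto (fun x => φ (x + d) / φ x) atTop (𝓝 ρ))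
    (hF : Tendsto (fun x => F x / φ x) atTop (𝓝 c)) :
    Tendsto (fun x => F (x + d) / φ x) atTop (𝓝 (c * ρ)) := by
  have hshift := tendsto_atTop_add_const_right atTop d tendsto_id
  refine ((hF.comp hshift).mul hρ).congr' ?_
  filter_upwards [hshift.eventually hφ] with x hx using div_mul_div_cancel₀ hx

theorem tendsto_rpow_mul_exp_comp_add_div (κ α d : ℝ) :
    Tendsto (fun x : ℝ => (x + d) ^ κ * exp (-α * (x + d)) / (x ^ κ * exp (-α * x)))
      atTop (𝓝 (exp (-α * d))) := by
  have h_ratio : Tendsto (fun x : ℝ => (x + d) / x) atTop (𝓝 1) := by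
    have := (tendsto_const_nhds (x := (1 : ℝ))).add
      (tendsto_const_nhds.div_atTop tendsto_id : Tendsto (fun x : ℝ => d / x) atTop (𝓝 0))
    rw [add_zero] at this
    refine this.congr' ?_
    filter_upwards [eventually_ne_atTop 0] with x hx
    field_simp
  have h_pow := (h_ratio.rpow_const (p := κ) (Or.inl one_ne_zero)).mul_const (exp (-α * d))
  rw [one_rpow, one_mul] at h_pow
  refine h_pow.congr' ?_
  filter_upwards [eventually_gt_atTop 0, eventually_gt_atTop (-d)] with x hx hxd
  rw [div_rpow (by linarith) hx.le, show -α * d = -α * (x + d) - -α * x by ring, exp_sub,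
    div_mul_div_comm]

namespace AntitoneOn

variable {g : ℝ → ℝ} {X : ℝ}

theorem nonneg_of_integrableOn_Ioi (hg : AntitoneOn g (Ici X)) (hint : IntegrableOn g (Ioi X))
    {x : ℝ} (hx : X ≤ x) : 0 ≤ g x := by
  by_contra! hneg
  have hconst : IntegrableOn (fun _ => g x) (Ioi x) := by
    refine Integrable.mono (hint.mono_set (Ioi_subset_Ioi hx)) aestronglyMeasurable_const ?_
    filter_upwards [ae_restrict_mem measurableSet_Ioi] with u hu
    have := hg hx (hx.trans hu.le) hu.le
    rw [Real.norm_eq_abs, Real.norm_eq_abs, abs_of_neg hneg, abs_of_neg (this.trans_lt hneg)]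
    linarith
  simp [integrableOn_const_iff, hneg.ne] at hconst

theorem integral_Ioi_sub_le (hg : AntitoneOn g (Ici X)) (hint : IntegrableOn g (Ioi X))
    {a b : ℝ} (ha : X ≤ a) (hab : a ≤ b) :
    (∫ u in Ioi a, g u) - ∫ u in Ioi b, g u ≤ (b - a) * g a := by
  rw [intervalIntegral.integral_Ioi_sub_Ioi (hint.mono_set (Ioi_subset_Ioi ha)) hab]
  have hIcc : AntitoneOn g (uIcc a b) := hg.mono fun u hu => ha.trans (uIcc_of_le hab ▸ hu).1
  simpa using intervalIntegral.integral_mono_on (μ := volume) hab hIcc.intervalIntegrable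
    intervalIntegrable_const fun u hu => hg (Set.mem_Ici.2 ha) (ha.trans hu.1) hu.1

theorem mul_le_integral_Ioi_sub (hg : AntitoneOn g (Ici X)) (hint : IntegrableOn g (Ioi X))
    {a b : ℝ} (ha : X ≤ a) (hab : a ≤ b) :
    (b - a) * g b ≤ (∫ u in Ioi a, g u) - ∫ u in Ioi b, g u := by
  rw [intervalIntegral.integral_Ioi_sub_Ioi (hint.mono_set (Ioi_subset_Ioi ha)) hab]
  have hIcc : AntitoneOn g (uIcc a b) := hg.mono fun u hu => ha.trans (uIcc_of_le hab ▸ hu).1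
  simpa using intervalIntegral.integral_mono_on (μ := volume) hab intervalIntegrable_const
    hIcc.intervalIntegrable fun u hu => hg (ha.trans hu.1) (ha.trans hab) hu.2

theorem antitoneOn_integral_Ioi (hg : AntitoneOn g (Ici X)) (hint : IntegrableOn g (Ioi X)) :
    AntitoneOn (fun x => ∫ u in Ioi x, g u) (Ici X) := by
  intro a ha b _ hab
  refine setIntegral_mono_set (hint.mono_set (Ioi_subset_Ioi ha)) ?_
    (Ioi_subset_Ioi hab).eventuallyLE
  filter_upwards [ae_restrict_mem measurableSet_Ioi] with u hu
  exact hg.nonneg_of_integrableOn_Ioi hint (le_trans ha hu.le)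

theorem tendsto_div_of_tendsto_integral_Ioi_div {φ : ℝ → ℝ} {α c : ℝ}
    (hg : AntitoneOn g (Ici X)) (hint : IntegrableOn g (Ioi X))
    (hφ_pos : ∀ᶠ x in atTop, 0 < φ x)
    (hφ_shift : ∀ d, Tendsto (fun x => φ (x + d) / φ x) atTop (𝓝 (exp (-α * d))))
    (hlim : Tendsto (fun x => (∫ u in Ioi x, g u) / φ x) atTop (𝓝 c)) :
    Tendsto (fun x => g x / φ x) atTop (𝓝 (α * c)) := by
  set T : ℝ → ℝ := fun x => ∫ u in Ioi x, g u
  have hT_shift (d : ℝ) : Tendsto (fun x => T (x + d) / φ x) atTop (𝓝 (c * exp (-α * d))) :=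
    tendsto_comp_add_div_of_tendsto_div (hφ_pos.mono fun _ => ne_of_gt) (hφ_shift d) hlim
  have hslope (k a : ℝ) : Tendsto (fun h => k * ((exp (a * h) - 1) / h)) (𝓝[>] 0) (𝓝 (k * a)) :=
    ((tendsto_exp_mul_sub_one_div a).mono_left (nhdsGT_le_nhdsNE 0)).const_mul k
  refine tendsto_of_squeeze_family (G := 𝓝[>] 0)
    (l := fun h => -c * ((exp (-α * h) - 1) / h)) (r := fun h => c * ((exp (α * h) - 1) / h))
    (by simpa [mul_comm] using hslope (-c) (-α)) (by simpa [mul_comm] using hslope c α) ?_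
  filter_upwards [self_mem_nhdsWithin] with h (hh : 0 < h)
  refine ⟨fun x => (T x / φ x - T (x + h) / φ x) / h,
    fun x => (T (x + -h) / φ x - T x / φ x) / h, ?_, ?_, ?_⟩
  · convert (hlim.sub (hT_shift h)).div_const h using 2
    field_simp
    ring
  · convert ((hT_shift (-h)).sub hlim).div_const h using 2
    field_simp
  · filter_upwards [hφ_pos, eventually_ge_atTop (X + h)] with x hφx hx
    have hXx : X ≤ x := by linarith
    have hlow := hg.integral_Ioi_sub_le hint hXx (le_add_of_nonneg_right hh.le)
    have hup := hg.mul_le_integral_Ioi_sub hint (a := x + -h) (b := x) (by linarith) (by linarith)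
    rw [← sub_div, ← sub_div, div_div, div_div, div_le_div_iff₀ (by positivity) hφx,
      div_le_div_iff₀ hφx (by positivity)]
    constructor <;> nlinarith

end AntitoneOn

namespace Titer

variable {f : ℝ → ℝ}

theorem succ_apply (n : ℕ) (f : ℝ → ℝ) (x : ℝ) :
    Titer (n + 1) f x = ∫ u in Ioi x, Titer n f u := rfl

theorem ne_zero_of_le {m n : ℕ} (hmn : m ≤ n) (hn : Titer n f ≠ 0) : Titer m f ≠ 0 := by
  induction n, hmn using Nat.le_induction with
  | base => exact hn
  | succ n _ ih =>
    refine ih fun h => hn ?_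
    funext x
    simp [succ_apply, h]

theorem exists_integrableOn_Ioi_of_succ_ne_zero {m : ℕ} (h : Titer (m + 1) f ≠ 0) :
    ∃ Y, IntegrableOn (Titer m f) (Ioi Y) := by
  by_contra! hnot
  exact h (funext fun x => integral_undef (hnot x))

theorem exists_integrableOn_antitoneOn (hf : ∃ X, IntegrableOn f (Ioi X) ∧ AntitoneOn f (Ici X))
    {n : ℕ} (hn : Titer n f ≠ 0) :
    ∀ m < n, ∃ X, IntegrableOn (Titer m f) (Ioi X) ∧ AntitoneOn (Titer m f) (Ici X)
  | 0, _ => hf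
  | m + 1, hm => by
    obtain ⟨X, hint, hanti⟩ := exists_integrableOn_antitoneOn hf hn m (by omega)
    obtain ⟨Y, hY⟩ := exists_integrableOn_Ioi_of_succ_ne_zero (ne_zero_of_le hm hn)
    exact ⟨max X Y, hY.mono_set (Ioi_subset_Ioi (le_max_right X Y)),
      (hanti.antitoneOn_integral_Ioi hint).mono (Ici_subset_Ici.2 (le_max_left X Y))⟩

theorem tendsto_div_of_tendsto_div {φ : ℝ → ℝ} {α b : ℝ} {n : ℕ}
    (hf : ∃ X, IntegrableOn f (Ioi X) ∧ AntitoneOn f (Ici X)) (hφ_pos : ∀ᶠ x in atTop, 0 < φ x)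
    (hφ_shift : ∀ d, Tendsto (fun x => φ (x + d) / φ x) atTop (𝓝 (exp (-α * d))))
    (hb : b ≠ 0) (hlim : Tendsto (fun x => Titer n f x / φ x) atTop (𝓝 b)) :
    Tendsto (fun x => f x / φ x) atTop (𝓝 (α ^ n * b)) := by
  have hn : Titer n f ≠ 0 := fun h => hb (tendsto_nhds_unique hlim (by simp [h]))
  suffices ∀ j ≤ n, Tendsto (fun x => Titer (n - j) f x / φ x) atTop (𝓝 (α ^ j * b)) by
    simpa [Titer] using this n le_rfl
  intro j hj
  induction j with
  | zero => simpa using hlim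
  | succ j ih =>
    obtain ⟨X, hint, hanti⟩ := exists_integrableOn_antitoneOn hf hn (n - (j + 1)) (by omega)
    have hnext := ih (by omega)
    rw [show n - j = n - (j + 1) + 1 by omega] at hnext
    rw [pow_succ', mul_assoc]
    exact hanti.tendsto_div_of_tendsto_integral_Ioi_div hint hφ_pos hφ_shift hnext

end Titer

theorem stmt_14_general
    (f : ℝ → ℝ)
    (hf_int : IntegrableOn f (Set.Ici 0))
    (hf_mono : ∃ x₀ : ℝ, 0 ≤ x₀ ∧ AntitoneOn f (Set.Ici x₀))
    (n : ℕ) (κ : ℝ) (b : ℝ) (hb : 0 < b) (α : ℝ)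
    (hasym : Tendsto (fun x : ℝ => Titer n f x / (x ^ κ * Real.exp (-α * x)))
      atTop (nhds b)) :
    Tendsto (fun x : ℝ => f x / (x ^ κ * Real.exp (-α * x)))
      atTop (nhds (α ^ n * b)) := by
  obtain ⟨x₀, hx₀, hf_anti⟩ := hf_mono
  have hf_tail : ∃ X, IntegrableOn f (Ioi X) ∧ AntitoneOn f (Ici X) :=
    ⟨x₀, hf_int.mono_set fun x hx => hx₀.trans (le_of_lt hx), hf_anti⟩
  have hφ_pos : ∀ᶠ x : ℝ in atTop, 0 < x ^ κ * exp (-α * x) := by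
    filter_upwards [eventually_gt_atTop 0] with x hx using by positivity
  exact Titer.tendsto_div_of_tendsto_div hf_tail hφ_pos
    (fun d => by simpa [mul_div_assoc] using tendsto_rpow_mul_exp_comp_add_div κ α d) hb.ne' hasym

/-- Lemma 6.1: if `f` is nonnegative, integrable and ultimately
nonincreasing and `Tⁿ(f)(x) ~ b x^κ e^{-αx}`, then `f(x) ~ αⁿ b x^κ e^{-αx}`. -/
theorem stmt_14
    (f : ℝ → ℝ)
    (hf_nonneg : ∀ x, 0 ≤ x → 0 ≤ f x)
    (hf_int : IntegrableOn f (Set.Ici 0))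
    (hf_mono : ∃ x₀ : ℝ, 0 ≤ x₀ ∧ AntitoneOn f (Set.Ici x₀))
    (n : ℕ) (hn : 1 ≤ n) (κ : ℝ) (b : ℝ) (hb : 0 < b) (α : ℝ) (hα : 0 ≤ α)
    (hasym : Tendsto (fun x : ℝ => Titer n f x / (x ^ κ * Real.exp (-α * x)))
      atTop (nhds b)) :
    Tendsto (fun x : ℝ => f x / (x ^ κ * Real.exp (-α * x)))
      atTop (nhds (α ^ n * b)) :=
  stmt_14_general f hf_int hf_mono n κ b hb α hasym
end
end
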